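/- Let 0 < δ ≤ 1 and let V_j ∈ ℝ², j ∈ J ⊂ ℤ, be unit vectors with angular separation ∠(V_i, V_j) ≥ c·δ·|i − j| for some c > 0 and all i ≠ j. Fix points x, y ∈ ℝ² with x ≠ y. Then there is a constant C (depending only on c) such that the number of indices j ∈ J for which the line through x with direction V_j passes within distance 4δ² of y satisfies #{j ∈ J : dist(y, x + ℝ·V_j) ≤ 4δ²} ≤ C·(1 + δ/|x − y|). -/

import Mathlib

open InnerProductGeometry

private lemma count_bound (S : Set ℤ) (hfin : S.Finite) (K : ℝ) (hK : 0 ≤ K)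
    (h : ∀ i ∈ S, ∀ j ∈ S, |(i : ℝ) - (j : ℝ)| ≤ K) : (S.ncard : ℝ) ≤ 2 * K + 1 := by
  rcases S.eq_empty_or_nonempty with hS | ⟨m, hm⟩
  · rw [hS]
    simp
    linarith
  · have hsub : S ⊆ Set.Icc (m - ⌊K⌋) (m + ⌊K⌋) := by
      intro j hj
      have h1 : |(j : ℝ) - (m : ℝ)| ≤ K := h j hj m hm
      have h2 : |j - m| ≤ ⌊K⌋ := by
        rw [Int.le_floor]
        push_cast
        exact h1
      rw [abs_le] at h2
      simp only [Set.mem_Icc]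
      omega
    have h3 : (S.ncard : ℝ) ≤ ((Set.Icc (m - ⌊K⌋) (m + ⌊K⌋)).ncard : ℝ) := by
      exact_mod_cast Set.ncard_le_ncard hsub (Set.finite_Icc _ _)
    have hfl : (0 : ℤ) ≤ ⌊K⌋ := Int.floor_nonneg.mpr hK
    have h4 : (Set.Icc (m - ⌊K⌋) (m + ⌊K⌋)).ncard = (2 * ⌊K⌋ + 1).toNat := by
      rw [← Finset.coe_Icc, Set.ncard_coe_finset, Int.card_Icc]
      congr 1
      ring
    have h5 : (((2 * ⌊K⌋ + 1).toNat : ℕ) : ℝ) = 2 * (⌊K⌋ : ℝ) + 1 := by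
      have h6 : ((2 * ⌊K⌋ + 1).toNat : ℤ) = 2 * ⌊K⌋ + 1 := Int.toNat_of_nonneg (by omega)
      have h7 : (((2 * ⌊K⌋ + 1).toNat : ℤ) : ℝ) = ((2 * ⌊K⌋ + 1 : ℤ) : ℝ) := by
        exact_mod_cast congrArg (fun z : ℤ => (z : ℝ)) h6
      push_cast at h7 ⊢
      linarith
    rw [h4, h5] at h3
    have := Int.floor_le K
    linarith

private lemma angle_le_norm_sub (a b : EuclideanSpace ℝ (Fin 2)) (ha : ‖a‖ = 1)
    (hb : ‖b‖ = 1) : angle a b ≤ Real.pi / 2 * ‖a - b‖ := by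
  set θ := angle a b with hθ
  have hπ0 := Real.pi_pos
  have h0 : 0 ≤ θ := angle_nonneg a b
  have hπ : θ ≤ Real.pi := angle_le_pi a b
  have hcos : Real.cos θ = (inner ℝ a b : ℝ) := by
    rw [hθ, cos_angle, ha, hb]; ring
  have hsin : Real.sin (θ / 2) = Real.sqrt ((1 - Real.cos θ) / 2) :=
    Real.sin_half_eq_sqrt h0 (by linarith)
  have hsq : Real.sin (θ / 2) ^ 2 = (1 - Real.cos θ) / 2 := by
    rw [hsin, Real.sq_sqrt]
    nlinarith [Real.cos_le_one θ]
  have hnorm : ‖a - b‖ ^ 2 = 2 - 2 * (inner ℝ a b : ℝ) := by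
    rw [norm_sub_sq_real, ha, hb]; ring
  have hsin0 : 0 ≤ Real.sin (θ / 2) :=
    Real.sin_nonneg_of_nonneg_of_le_pi (by linarith) (by linarith)
  have hne : ‖a - b‖ = 2 * Real.sin (θ / 2) := by
    nlinarith [norm_nonneg (a - b), hsq, hnorm, hcos]
  have hlow : 2 / Real.pi * (θ / 2) ≤ Real.sin (θ / 2) :=
    Real.mul_le_sin (by linarith) (by linarith)
  have hlow2 : θ / Real.pi ≤ Real.sin (θ / 2) := by
    have heq : 2 / Real.pi * (θ / 2) = θ / Real.pi := by ring
    rwa [heq] at hlow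
  have hfin := (div_le_iff₀ hπ0).mp hlow2
  rw [hne]
  linarith

private lemma infDist_line_lower (x y V : EuclideanSpace ℝ (Fin 2)) (hV : ‖V‖ = 1) :
    Real.sqrt (‖y - x‖ ^ 2 - (inner ℝ (y - x) V : ℝ) ^ 2) ≤
      Metric.infDist y {p | ∃ t : ℝ, p = x + t • V} := by
  set w : EuclideanSpace ℝ (Fin 2) := y - x with hw
  set a : ℝ := (inner ℝ w V : ℝ) with hadef
  have hpt : ∀ p ∈ {p : EuclideanSpace ℝ (Fin 2) | ∃ t : ℝ, p = x + t • V},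
      Real.sqrt (‖w‖ ^ 2 - a ^ 2) ≤ dist y p := by
    rintro p ⟨t, rfl⟩
    have hd : dist y (x + t • V) = ‖w - t • V‖ := by
      rw [dist_eq_norm]
      congr 1
      rw [hw]
      abel
    have hexp : ‖w - t • V‖ ^ 2 = ‖w‖ ^ 2 - 2 * t * a + t ^ 2 := by
      rw [norm_sub_sq_real, real_inner_smul_right, norm_smul, hV, hadef]
      simp
      nlinarith [sq_abs t]
    have hle : ‖w‖ ^ 2 - a ^ 2 ≤ ‖w - t • V‖ ^ 2 := by
      rw [hexp]; nlinarith [sq_nonneg (t - a)]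
    rw [hd]
    calc Real.sqrt (‖w‖ ^ 2 - a ^ 2) ≤ Real.sqrt (‖w - t • V‖ ^ 2) :=
          Real.sqrt_le_sqrt hle
      _ = ‖w - t • V‖ := Real.sqrt_sq (norm_nonneg _)
  by_contra hcon
  push_neg at hcon
  have hne : {p : EuclideanSpace ℝ (Fin 2) | ∃ t : ℝ, p = x + t • V}.Nonempty :=
    ⟨x + (0 : ℝ) • V, ⟨0, rfl⟩⟩
  obtain ⟨p, hp, hdp⟩ := (Metric.infDist_lt_iff hne).mp hcon
  exact absurd (hpt p hp) (by linarith)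

private lemma close_dir {r δ : ℝ} (hr : 0 < r)
    (w u : EuclideanSpace ℝ (Fin 2)) (hw : ‖w‖ = r) (hu : ‖u‖ = 1)
    (ha0 : 0 ≤ (inner ℝ w u : ℝ)) (hkey : r ^ 2 - (inner ℝ w u : ℝ) ^ 2 ≤ 16 * δ ^ 4) :
    ‖u - r⁻¹ • w‖ ^ 2 ≤ 32 * δ ^ 4 / r ^ 2 := by
  set a : ℝ := (inner ℝ w u : ℝ) with hadef
  have hCS : a ≤ r := by
    have := real_inner_le_norm w u
    rwa [hw, hu, mul_one] at this
  have h1 : r ^ 2 - 16 * δ ^ 4 ≤ a * r := by nlinarith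
  have hexp : ‖u - r⁻¹ • w‖ ^ 2 = 2 - 2 * (a / r) := by
    rw [norm_sub_sq_real, real_inner_smul_right, norm_smul, hu, hw, real_inner_comm, ← hadef]
    rw [Real.norm_eq_abs, abs_of_nonneg (inv_nonneg.mpr hr.le)]
    field_simp
    ring
  rw [hexp, le_div_iff₀ (by positivity)]
  have h2 : (2 - 2 * (a / r)) * r ^ 2 = 2 * r ^ 2 - 2 * (a * r) := by
    field_simp
  rw [h2]
  linarith

set_option maxHeartbeats 1000000 in
theorem stmt_4 (c : ℝ) (hc : 0 < c) :
    ∃ C : ℝ, 0 < C ∧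
      ∀ (δ : ℝ), 0 < δ → δ ≤ 1 →
      ∀ (J : Finset ℤ) (V : ℤ → EuclideanSpace ℝ (Fin 2)),
        (∀ j ∈ J, ‖V j‖ = 1) →
        (∀ i ∈ J, ∀ j ∈ J, i ≠ j →
          c * δ * |(i : ℝ) - (j : ℝ)| ≤ InnerProductGeometry.angle (V i) (V j)) →
        ∀ x y : EuclideanSpace ℝ (Fin 2), x ≠ y →
          ({j ∈ (J : Set ℤ) |
              Metric.infDist y {p | ∃ t : ℝ, p = x + t • V j} ≤ 4 * δ ^ 2}.ncard : ℝ)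
            ≤ C * (1 + δ / dist x y) := by
  refine ⟨2 + 96 / c, by positivity, ?_⟩
  intro δ hδ hδ1 J V hV hsep x y hxy
  have hπ4 := Real.pi_le_four
  have hπ0 := Real.pi_pos
  obtain ⟨r, hrdef⟩ : ∃ r : ℝ, dist x y = r := ⟨_, rfl⟩
  rw [hrdef]
  have hr0 : 0 < r := hrdef ▸ dist_pos.mpr hxy
  obtain ⟨w, hw⟩ : ∃ w : EuclideanSpace ℝ (Fin 2), w = y - x := ⟨_, rfl⟩
  have hrw : ‖w‖ = r := by rw [hw, ← hrdef, dist_eq_norm, norm_sub_rev]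
  set S : Set ℤ := {j ∈ (J : Set ℤ) |
      Metric.infDist y {p | ∃ t : ℝ, p = x + t • V j} ≤ 4 * δ ^ 2} with hSdef
  have hfin : S.Finite := J.finite_toSet.subset (fun j hj => hj.1)
  have hdr0 : (0 : ℝ) ≤ δ / r := by positivity
  have hc96 : (0 : ℝ) ≤ 96 / c := by positivity
  have key : ∀ j ∈ S, r ^ 2 - (inner ℝ w (V j) : ℝ) ^ 2 ≤ 16 * δ ^ 4 := by
    intro j hj
    obtain ⟨hjJ, hjd⟩ := hj
    have h1 := infDist_line_lower x y (V j) (hV j hjJ)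
    rw [← hw, hrw] at h1
    have h2 : Real.sqrt (r ^ 2 - (inner ℝ w (V j) : ℝ) ^ 2) ≤ 4 * δ ^ 2 :=
      le_trans h1 hjd
    by_cases h0 : r ^ 2 - (inner ℝ w (V j) : ℝ) ^ 2 ≤ 0
    · nlinarith
    · push_neg at h0
      have := Real.sq_sqrt h0.le
      nlinarith [Real.sqrt_nonneg (r ^ 2 - (inner ℝ w (V j) : ℝ) ^ 2)]
  rcases le_or_gt r (4 * δ ^ 2) with hcase | hcase
  · -- r is small: use angle ≤ π ≤ 4
    have hb : ∀ i ∈ S, ∀ j ∈ S, |(i : ℝ) - (j : ℝ)| ≤ 4 / (c * δ) := by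
      intro i hi j hj
      rcases eq_or_ne i j with rfl | hij
      · simp
        positivity
      · have h1 := hsep i hi.1 j hj.1 hij
        have h2 : c * δ * |(i : ℝ) - (j : ℝ)| ≤ 4 :=
          le_trans h1 (le_trans (angle_le_pi _ _) hπ4)
        rw [le_div_iff₀ (by positivity)]
        linarith
    have hcount := count_bound S hfin _ (by positivity) hb
    have hδr : 1 / (4 * δ) ≤ δ / r := by
      rw [div_le_div_iff₀ (by positivity) hr0]
      nlinarith
    have hfrac : 2 * (4 / (c * δ)) ≤ 96 / c * (δ / r) := by
      have h1 : 96 / c * (1 / (4 * δ)) = 24 / (c * δ) := by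
        field_simp
        ring
      calc 2 * (4 / (c * δ)) = 8 / (c * δ) := by ring
        _ ≤ 24 / (c * δ) := by gcongr <;> norm_num
        _ = 96 / c * (1 / (4 * δ)) := h1.symm
        _ ≤ 96 / c * (δ / r) := mul_le_mul_of_nonneg_left hδr hc96
    nlinarith [hcount, hfrac, hdr0, hc96]
  · -- r is large
    have hr216 : 16 * δ ^ 4 ≤ r ^ 2 := by nlinarith
    have grp : ∀ (ε : ℝ), ε = 1 ∨ ε = -1 → ∀ i ∈ S, ∀ j ∈ S, i ≠ j →
        0 ≤ (inner ℝ w (ε • V i) : ℝ) → 0 ≤ (inner ℝ w (ε • V j) : ℝ) →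
        |(i : ℝ) - (j : ℝ)| ≤ 24 * δ / (c * r) := by
      intro ε hε i hi j hj hij hai haj
      have hε2 : ε ^ 2 = 1 := by rcases hε with rfl | rfl <;> norm_num
      have hεn : ‖ε‖ = 1 := by rcases hε with rfl | rfl <;> simp
      have hclose : ∀ k, k ∈ S → 0 ≤ (inner ℝ w (ε • V k) : ℝ) →
          ‖ε • V k - r⁻¹ • w‖ ≤ 6 * δ ^ 2 / r := by
        intro k hk hak
        have hnk : ‖ε • V k‖ = 1 := by
          rw [norm_smul, hεn, hV k hk.1, mul_one]
        have hkey2 : r ^ 2 - (inner ℝ w (ε • V k) : ℝ) ^ 2 ≤ 16 * δ ^ 4 := by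
          have hin : (inner ℝ w (ε • V k) : ℝ) = ε * (inner ℝ w (V k) : ℝ) :=
            real_inner_smul_right w (V k) ε
          rw [hin, mul_pow, hε2, one_mul]
          exact key k hk
        have h1 := close_dir hr0 w (ε • V k) hrw hnk hak hkey2
        have h2 : ‖ε • V k - r⁻¹ • w‖ ^ 2 ≤ (6 * δ ^ 2 / r) ^ 2 := by
          have : (6 * δ ^ 2 / r) ^ 2 = 36 * δ ^ 4 / r ^ 2 := by
            field_simp; ring
          rw [this]
          refine le_trans h1 ?_
          rw [div_le_div_iff₀ (by positivity) (by positivity)]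
          nlinarith [mul_nonneg (pow_nonneg hδ.le 4) (sq_nonneg r)]
        have h3 : (0 : ℝ) ≤ 6 * δ ^ 2 / r := by positivity
        nlinarith [norm_nonneg (ε • V k - r⁻¹ • w)]
      have hdij : ‖ε • V i - ε • V j‖ ≤ 12 * δ ^ 2 / r := by
        have h1 := hclose i hi hai
        have h2 := hclose j hj haj
        have h3 : ε • V i - ε • V j =
            (ε • V i - r⁻¹ • w) - (ε • V j - r⁻¹ • w) := by abel
        rw [h3]
        calc ‖(ε • V i - r⁻¹ • w) - (ε • V j - r⁻¹ • w)‖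
            ≤ ‖ε • V i - r⁻¹ • w‖ + ‖ε • V j - r⁻¹ • w‖ := norm_sub_le _ _
          _ ≤ 6 * δ ^ 2 / r + 6 * δ ^ 2 / r := add_le_add h1 h2
          _ = 12 * δ ^ 2 / r := by ring
      have hang : angle (ε • V i) (ε • V j) ≤ 24 * δ ^ 2 / r := by
        have h1 := angle_le_norm_sub (ε • V i) (ε • V j)
          (by rw [norm_smul, hεn, hV i hi.1, mul_one])
          (by rw [norm_smul, hεn, hV j hj.1, mul_one])
        have h2 : Real.pi / 2 * ‖ε • V i - ε • V j‖ ≤ 2 * (12 * δ ^ 2 / r) := by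
          have hn0 : (0 : ℝ) ≤ ‖ε • V i - ε • V j‖ := norm_nonneg _
          nlinarith
        calc angle (ε • V i) (ε • V j) ≤ Real.pi / 2 * ‖ε • V i - ε • V j‖ := h1
          _ ≤ 2 * (12 * δ ^ 2 / r) := h2
          _ = 24 * δ ^ 2 / r := by ring
      have hangeq : angle (ε • V i) (ε • V j) = angle (V i) (V j) := by
        rcases hε with rfl | rfl
        · rw [one_smul, one_smul]
        · rw [neg_smul, neg_smul, one_smul, one_smul, angle_neg_neg]
      have h1 := hsep i hi.1 j hj.1 hij
      rw [← hangeq] at h1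
      have h2 : c * δ * |(i : ℝ) - (j : ℝ)| ≤ 24 * δ ^ 2 / r := le_trans h1 hang
      rw [le_div_iff₀ (by positivity)]
      rw [le_div_iff₀ hr0] at h2
      nlinarith [abs_nonneg ((i : ℝ) - (j : ℝ))]
    set S1 : Set ℤ := {j ∈ S | 0 ≤ (inner ℝ w (V j) : ℝ)} with hS1
    set S2 : Set ℤ := {j ∈ S | (inner ℝ w (V j) : ℝ) < 0} with hS2
    have hKnn : (0 : ℝ) ≤ 24 * δ / (c * r) := by positivity
    have hb1 : ∀ i ∈ S1, ∀ j ∈ S1, |(i : ℝ) - (j : ℝ)| ≤ 24 * δ / (c * r) := by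
      intro i hi j hj
      rcases eq_or_ne i j with rfl | hij
      · simpa using hKnn
      · have h1 : (0 : ℝ) ≤ (inner ℝ w ((1 : ℝ) • V i) : ℝ) := by
          rw [one_smul]; exact hi.2
        have h2 : (0 : ℝ) ≤ (inner ℝ w ((1 : ℝ) • V j) : ℝ) := by
          rw [one_smul]; exact hj.2
        exact grp 1 (Or.inl rfl) i hi.1 j hj.1 hij h1 h2
    have hb2 : ∀ i ∈ S2, ∀ j ∈ S2, |(i : ℝ) - (j : ℝ)| ≤ 24 * δ / (c * r) := by
      intro i hi j hj
      rcases eq_or_ne i j with rfl | hij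
      · simpa using hKnn
      · refine grp (-1) (Or.inr rfl) i hi.1 j hj.1 hij ?_ ?_
        · have := hi.2
          rw [real_inner_smul_right]
          nlinarith
        · have := hj.2
          rw [real_inner_smul_right]
          nlinarith
    have hfin1 : S1.Finite := hfin.subset (fun j hj => hj.1)
    have hfin2 : S2.Finite := hfin.subset (fun j hj => hj.1)
    have hc1 := count_bound S1 hfin1 _ hKnn hb1
    have hc2 := count_bound S2 hfin2 _ hKnn hb2
    have hunion : S = S1 ∪ S2 := by
      ext j
      simp only [hS1, hS2, Set.mem_union, Set.mem_setOf_eq, Set.mem_sep_iff]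
      constructor
      · intro hjS
        rcases le_or_gt 0 (inner ℝ w (V j) : ℝ) with h | h
        · exact Or.inl ⟨hjS, h⟩
        · exact Or.inr ⟨hjS, h⟩
      · rintro (⟨h, _⟩ | ⟨h, _⟩) <;> exact h
    have hcard : (S.ncard : ℝ) ≤ (S1.ncard : ℝ) + (S2.ncard : ℝ) := by
      rw [hunion]
      exact_mod_cast Set.ncard_union_le S1 S2
    have htot : (S.ncard : ℝ) ≤ 96 / c * (δ / r) + 2 := by
      have heq : 2 * (24 * δ / (c * r)) + 1 + (2 * (24 * δ / (c * r)) + 1)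
          = 96 / c * (δ / r) + 2 := by
        field_simp
        ring
      linarith [hcard, hc1, hc2, heq.le, heq.ge]
    nlinarith [htot, hdr0, hc96]
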